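/- Let cost_E(x) = E[max_s Y_s · c_s(x)] and cost_T(x) = min_B (B + Σ_s p_s (c_s(x) - B)⁺), where for each feasible x, c_s(x) ≥ 0 and the Y_s are independent Bernoullis with parameters p_s summing to at least 1. If x_T minimizes cost_T over a feasible set F and x satisfies cost_T(x) ≤ α · cost_T(x_T) for some α ≥ 1, then cost_E(x) ≤ (α/(1 - 1/e)) · inf_{y ∈ F} cost_E(y). -/

import Mathlib

/-- Expected value of `max_{s ∈ A} v s` (with `max ∅ = 0`) where each index `s`
is included in `A` independently with probability `p s`. -/
noncomputable def expectedMax {m : ℕ} (p v : Fin m → ℝ) : ℝ :=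
  ∑ A : Finset (Fin m),
    (∏ s ∈ A, p s) * (∏ s ∈ Aᶜ, (1 - p s)) * (A.fold max 0 v)

/-- The truncated two-stage objective `min_B (B + Σ_s p_s (c_s - B)⁺)`. -/
noncomputable def costTrunc {m : ℕ} (p c : Fin m → ℝ) : ℝ :=
  ⨅ B : ℝ, (B + ∑ s, p s * max (c s - B) 0)

/-!
For every threshold `B ≥ 0` and every set `A`, `max_{s ∈ A} c_s ≤ B + Σ_{s ∈ A} (c_s - B)⁺`;
taking expectations gives `cost_E ≤ B + Σ_s p_s (c_s - B)⁺`, and thresholds `B < 0` are never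
better than `0` because `Σ_s p_s ≥ 1`. Hence `cost_E ≤ cost_T`.

Conversely `(1 - 1/e) cost_T ≤ cost_E`, by induction on the support `T` of `c`. Let `δ` be the
least positive value of `c`. The layer `min c δ` contributes `δ` to the maximum exactly when the
random set meets `T`, which happens with probability
`1 - Π_{s ∈ T} (1 - p_s) ≥ (1 - 1/e) min(1, Σ_{s ∈ T} p_s)`, and what remains is the same problem
for `(c - δ)⁺`. If `Σ_{s ∈ T} p_s ≥ 1`, the threshold for `c` is `δ` plus the one for `(c - δ)⁺`;
otherwise threshold `0` is optimal for `(c - δ)⁺` as well, and `0` works for `c`.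

The theorem follows from
`cost_E(x) ≤ cost_T(x) ≤ α cost_T(x_T) ≤ α cost_T(y) ≤ α/(1 - 1/e) cost_E(y)`.
-/

open Finset Real

section BernoulliWeight

variable {ι : Type*} [Fintype ι] [DecidableEq ι] (p : ι → ℝ)

noncomputable def bernoulliWeight (A : Finset ι) : ℝ :=
  (∏ s ∈ A, p s) * ∏ s ∈ Aᶜ, (1 - p s)

variable {p} in
lemma bernoulliWeight_nonneg (hp0 : ∀ s, 0 ≤ p s) (hp1 : ∀ s, p s ≤ 1) (A : Finset ι) :
    0 ≤ bernoulliWeight p A :=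
  mul_nonneg (prod_nonneg fun s _ => hp0 s) (prod_nonneg fun s _ => sub_nonneg.2 (hp1 s))

lemma sum_bernoulliWeight_mul_prod (x : ι → ℝ) :
    ∑ A, bernoulliWeight p A * ∏ s ∈ A, x s = ∏ s, (p s * x s + (1 - p s)) := by
  rw [Fintype.prod_add]
  refine sum_congr rfl fun A _ => ?_
  rw [bernoulliWeight, prod_mul_distrib]
  ring

lemma sum_bernoulliWeight : ∑ A, bernoulliWeight p A = 1 := by
  simpa using sum_bernoulliWeight_mul_prod p 1

lemma sum_bernoulliWeight_of_disjoint (T : Finset ι) :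
    ∑ A, (if Disjoint A T then bernoulliWeight p A else 0) = ∏ s ∈ T, (1 - p s) := by
  have h := sum_bernoulliWeight_mul_prod p (fun s => if s ∉ T then 1 else 0)
  simp only [prod_boole, ← disjoint_left, mul_ite, mul_one, mul_zero] at h
  rw [h, ← univ_inter T, ← prod_ite_mem]
  exact prod_congr rfl fun s _ => by split_ifs <;> simp_all

lemma sum_bernoulliWeight_of_not_disjoint (T : Finset ι) :
    ∑ A, (if Disjoint A T then 0 else bernoulliWeight p A) = 1 - ∏ s ∈ T, (1 - p s) := by
  rw [← sum_bernoulliWeight_of_disjoint p T, ← sum_bernoulliWeight p, ← sum_sub_distrib]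
  exact sum_congr rfl fun A _ => by split_ifs <;> ring

lemma sum_bernoulliWeight_of_mem (s : ι) :
    ∑ A, (if s ∈ A then bernoulliWeight p A else 0) = p s := by
  simpa [disjoint_singleton_right, ite_not] using sum_bernoulliWeight_of_not_disjoint p {s}

lemma sum_bernoulliWeight_mul_sum (u : ι → ℝ) :
    ∑ A, bernoulliWeight p A * ∑ s ∈ A, u s = ∑ s, p s * u s := by
  simp_rw [← sum_bernoulliWeight_of_mem p, sum_mul, ite_mul, zero_mul, mul_sum]
  rw [sum_comm]
  exact sum_congr rfl fun A _ => by rw [sum_ite_mem, univ_inter]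

end BernoulliWeight

lemma prod_one_sub_le_exp_neg_sum {ι : Type*} (s : Finset ι) {p : ι → ℝ}
    (hp1 : ∀ i, p i ≤ 1) : ∏ i ∈ s, (1 - p i) ≤ exp (-∑ i ∈ s, p i) := by
  rw [← sum_neg_distrib, exp_sum]
  exact prod_le_prod (fun i _ => sub_nonneg.2 (hp1 i)) fun i _ => one_sub_le_exp_neg (p i)

-- On `[0, 1]` this is the chord of the concave function `1 - exp (-x)`.
lemma mul_min_one_le_one_sub_exp_neg {x : ℝ} (hx : 0 ≤ x) :
    (1 - (exp 1)⁻¹) * min 1 x ≤ 1 - exp (-x) := by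
  rcases le_total x 1 with hx1 | hx1
  · have h := convexOn_exp.2 (Set.mem_univ (-1)) (Set.mem_univ 0) hx (sub_nonneg.2 hx1)
      (add_sub_cancel x 1)
    simp only [smul_eq_mul, mul_neg, mul_one, mul_zero, add_zero, exp_zero, exp_neg] at h
    rw [min_eq_right hx1, exp_neg]
    linarith
  · rw [min_eq_left hx1, mul_one, ← exp_neg 1]
    linarith [exp_le_exp.2 (neg_le_neg hx1)]

lemma one_sub_inv_exp_one_pos : 0 < 1 - (exp 1)⁻¹ :=
  sub_pos.2 (inv_lt_one_of_one_lt₀ (one_lt_exp_iff.2 one_pos))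

lemma mul_min_one_le_one_sub_prod {ι : Type*} (s : Finset ι) {p : ι → ℝ}
    (hp0 : ∀ i, 0 ≤ p i) (hp1 : ∀ i, p i ≤ 1) :
    (1 - (exp 1)⁻¹) * min 1 (∑ i ∈ s, p i) ≤ 1 - ∏ i ∈ s, (1 - p i) :=
  (mul_min_one_le_one_sub_exp_neg (sum_nonneg fun i _ => hp0 i)).trans
    (sub_le_sub_left (prod_one_sub_le_exp_neg_sum s hp1) 1)

section FoldMax

variable {ι : Type*} (v : ι → ℝ) (A : Finset ι) {B : ℝ}

lemma fold_max_le_add_sum_posPart (hB : 0 ≤ B) :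
    A.fold max 0 v ≤ B + ∑ s ∈ A, max (v s - B) 0 := by
  have hsum : 0 ≤ ∑ s ∈ A, max (v s - B) 0 := sum_nonneg fun s _ => le_max_right _ _
  refine (fold_max_le _).2 ⟨by linarith, fun s hs => ?_⟩
  have := single_le_sum (fun t _ => le_max_right (v t - B) 0) hs
  linarith [le_max_left (v s - B) 0]

-- Splitting `v` at height `B` into `min v B` and `(v - B)⁺`: the maximum of the
-- lower part is `B` as soon as some `s ∈ A` reaches `B`.
lemma ite_add_fold_max_posPart_le [DecidableEq ι] (hB : 0 ≤ B) {T : Finset ι}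
    (hT : ∀ s, s ∈ T ↔ B ≤ v s) :
    (if Disjoint A T then 0 else B) + A.fold max 0 (fun s => max (v s - B) 0) ≤
      A.fold max 0 v := by
  set M := A.fold max 0 v
  have hM0 : 0 ≤ M := (le_fold_max _).2 (Or.inl le_rfl)
  have hupper : A.fold max 0 (fun s => max (v s - B) 0) ≤ max (M - B) 0 :=
    (fold_max_le _).2 ⟨le_max_right _ _, fun s hs =>
      max_le_max_right 0 (sub_le_sub_right ((le_fold_max _).2 (Or.inr ⟨s, hs, le_rfl⟩)) B)⟩
  split_ifs with hdisj
  · have hMB : M ≤ B := (fold_max_le _).2 ⟨hB, fun s hs =>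
      le_of_lt (not_le.1 fun h => disjoint_left.1 hdisj hs ((hT s).2 h))⟩
    rw [max_eq_right (sub_nonpos.2 hMB)] at hupper
    linarith
  · obtain ⟨s, hsA, hsT⟩ := not_disjoint_iff.1 hdisj
    have hBM : B ≤ M := (le_fold_max _).2 (Or.inr ⟨s, hsA, (hT s).1 hsT⟩)
    rw [max_eq_left (sub_nonneg.2 hBM)] at hupper
    linarith

end FoldMax

section CostTruncAt

variable {ι : Type*} [Fintype ι] {p c : ι → ℝ}

variable (p c) in
noncomputable def costTruncAt (B : ℝ) : ℝ :=
  B + ∑ s, p s * max (c s - B) 0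

lemma costTruncAt_zero (hc0 : ∀ s, 0 ≤ c s) : costTruncAt p c 0 = ∑ s, p s * c s := by
  simp only [costTruncAt, sub_zero, max_eq_left (hc0 _), zero_add]

lemma costTruncAt_zero_le_of_nonpos (hp0 : ∀ s, 0 ≤ p s) (hsum : 1 ≤ ∑ s, p s)
    (hc0 : ∀ s, 0 ≤ c s) {B : ℝ} (hB : B ≤ 0) : costTruncAt p c 0 ≤ costTruncAt p c B := by
  have hle : ∑ s, p s * (c s - B) ≤ ∑ s, p s * max (c s - B) 0 :=
    sum_le_sum fun s _ => mul_le_mul_of_nonneg_left (le_max_left _ _) (hp0 s)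
  simp only [mul_sub, sum_sub_distrib, ← sum_mul] at hle
  rw [costTruncAt_zero hc0, costTruncAt]
  nlinarith

lemma costTruncAt_zero_le_of_nonneg (hp0 : ∀ s, 0 ≤ p s) (hc0 : ∀ s, 0 ≤ c s)
    (hsupp : ∑ s with 0 < c s, p s ≤ 1) {B : ℝ} (hB : 0 ≤ B) :
    costTruncAt p c 0 ≤ costTruncAt p c B := by
  have hle : ∑ s, (p s * c s - B * if 0 < c s then p s else 0) ≤
      ∑ s, p s * max (c s - B) 0 := by
    refine sum_le_sum fun s _ => ?_
    split_ifs with hc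
    · nlinarith [hp0 s, le_max_left (c s - B) 0]
    · rw [le_antisymm (not_lt.1 hc) (hc0 s)]
      simpa using mul_nonneg (hp0 s) (le_max_right (0 - B) 0)
  rw [sum_sub_distrib, ← mul_sum, ← sum_filter] at hle
  rw [costTruncAt_zero hc0, costTruncAt]
  nlinarith

lemma costTruncAt_add {B : ℝ} (hB : 0 ≤ B) (δ : ℝ) :
    costTruncAt p c (B + δ) = δ + costTruncAt p (fun s => max (c s - δ) 0) B := by
  have h : ∀ s, max (c s - (B + δ)) 0 = max (max (c s - δ) 0 - B) 0 := fun s => by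
    rcases le_total (c s - δ) 0 with h | h
    · rw [max_eq_right h, max_eq_right (by linarith), max_eq_right (by linarith)]
    · rw [max_eq_left h, sub_sub, add_comm δ]
  simp only [costTruncAt, h]
  ring

lemma costTruncAt_zero_eq_mul_add (hc0 : ∀ s, 0 ≤ c s) {δ : ℝ} (hδ : 0 ≤ δ)
    (hδc : ∀ s, 0 < c s → δ ≤ c s) :
    costTruncAt p c 0 =
      δ * ∑ s with 0 < c s, p s + costTruncAt p (fun s => max (c s - δ) 0) 0 := by
  rw [costTruncAt_zero hc0, costTruncAt_zero fun s => le_max_right _ 0, mul_sum, sum_filter,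
    ← sum_add_distrib]
  refine sum_congr rfl fun s _ => ?_
  split_ifs with hs
  · rw [max_eq_left (sub_nonneg.2 (hδc s hs))]
    ring
  · rw [le_antisymm (not_lt.1 hs) (hc0 s), zero_sub, max_eq_right (neg_nonpos.2 hδ)]
    ring

lemma costTruncAt_nonneg (hp0 : ∀ s, 0 ≤ p s) (hsum : 1 ≤ ∑ s, p s) (hc0 : ∀ s, 0 ≤ c s)
    (B : ℝ) : 0 ≤ costTruncAt p c B := by
  rcases le_total 0 B with hB | hB
  · exact add_nonneg hB (sum_nonneg fun s _ => mul_nonneg (hp0 s) (le_max_right _ _))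
  · refine le_trans ?_ (costTruncAt_zero_le_of_nonpos hp0 hsum hc0 hB)
    rw [costTruncAt_zero hc0]
    exact sum_nonneg fun s _ => mul_nonneg (hp0 s) (hc0 s)

end CostTruncAt

section ExpectedMax

variable {m : ℕ} {p : Fin m → ℝ}

lemma expectedMax_eq_sum_bernoulliWeight (p v : Fin m → ℝ) :
    expectedMax p v = ∑ A, bernoulliWeight p A * A.fold max 0 v := rfl

lemma expectedMax_le_costTruncAt (hp0 : ∀ s, 0 ≤ p s) (hp1 : ∀ s, p s ≤ 1) (c : Fin m → ℝ)
    {B : ℝ} (hB : 0 ≤ B) : expectedMax p c ≤ costTruncAt p c B := by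
  calc expectedMax p c
      ≤ ∑ A, bernoulliWeight p A * (B + ∑ s ∈ A, max (c s - B) 0) :=
        sum_le_sum fun A _ => mul_le_mul_of_nonneg_left (fold_max_le_add_sum_posPart c A hB)
          (bernoulliWeight_nonneg hp0 hp1 A)
    _ = costTruncAt p c B := by
        simp only [mul_add, sum_add_distrib, ← sum_mul, sum_bernoulliWeight, one_mul,
          sum_bernoulliWeight_mul_sum, costTruncAt]

lemma expectedMax_le_costTrunc (hp0 : ∀ s, 0 ≤ p s) (hp1 : ∀ s, p s ≤ 1)
    (hsum : 1 ≤ ∑ s, p s) {c : Fin m → ℝ} (hc0 : ∀ s, 0 ≤ c s) :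
    expectedMax p c ≤ costTrunc p c := by
  refine le_ciInf fun B => ?_
  rcases le_total 0 B with hB | hB
  · exact expectedMax_le_costTruncAt hp0 hp1 c hB
  · exact (expectedMax_le_costTruncAt hp0 hp1 c le_rfl).trans
      (costTruncAt_zero_le_of_nonpos hp0 hsum hc0 hB)

lemma mul_one_sub_prod_add_expectedMax_posPart_le (hp0 : ∀ s, 0 ≤ p s)
    (hp1 : ∀ s, p s ≤ 1) (v : Fin m → ℝ) {δ : ℝ} (hδ : 0 ≤ δ) {T : Finset (Fin m)}
    (hT : ∀ s, s ∈ T ↔ δ ≤ v s) :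
    δ * (1 - ∏ s ∈ T, (1 - p s)) + expectedMax p (fun s => max (v s - δ) 0) ≤
      expectedMax p v := by
  rw [← sum_bernoulliWeight_of_not_disjoint, mul_sum]
  calc _ = ∑ A, bernoulliWeight p A *
        ((if Disjoint A T then 0 else δ) + A.fold max 0 (fun s => max (v s - δ) 0)) := by
        rw [expectedMax_eq_sum_bernoulliWeight, ← sum_add_distrib]
        exact sum_congr rfl fun A _ => by split_ifs <;> ring
    _ ≤ expectedMax p v :=
        sum_le_sum fun A _ => mul_le_mul_of_nonneg_left
          (ite_add_fold_max_posPart_le v A hδ hT) (bernoulliWeight_nonneg hp0 hp1 A)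

lemma exists_costTruncAt_le_expectedMax_of_posPart (hp0 : ∀ s, 0 ≤ p s)
    (hp1 : ∀ s, p s ≤ 1) {v : Fin m → ℝ} (hv0 : ∀ s, 0 ≤ v s) {δ : ℝ} (hδ : 0 < δ)
    (hδv : ∀ s, 0 < v s → δ ≤ v s)
    (ih : ∃ B, 0 ≤ B ∧ (1 - (exp 1)⁻¹) * costTruncAt p (fun s => max (v s - δ) 0) B ≤
      expectedMax p (fun s => max (v s - δ) 0)) :
    ∃ B, 0 ≤ B ∧ (1 - (exp 1)⁻¹) * costTruncAt p v B ≤ expectedMax p v := by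
  obtain ⟨B, hB, hle⟩ := ih
  set T : Finset (Fin m) := {s | 0 < v s}
  have hT : ∀ s, s ∈ T ↔ δ ≤ v s := fun s => by
    simpa [T] using ⟨hδv s, hδ.trans_le⟩
  have hpeel := mul_one_sub_prod_add_expectedMax_posPart_le hp0 hp1 v hδ.le hT
  have hhit := mul_min_one_le_one_sub_prod T hp0 hp1
  have hγ := one_sub_inv_exp_one_pos.le
  rcases le_total 1 (∑ s ∈ T, p s) with hbig | hsmall
  · refine ⟨B + δ, add_nonneg hB hδ.le, ?_⟩
    rw [min_eq_left hbig, mul_one] at hhit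
    rw [costTruncAt_add hB]
    nlinarith
  · refine ⟨0, le_rfl, ?_⟩
    rw [min_eq_right hsmall] at hhit
    have hsupp : ∑ s with 0 < max (v s - δ) 0, p s ≤ 1 := by
      refine le_trans (sum_le_sum_of_subset_of_nonneg (fun s => ?_) fun s _ _ => hp0 s) hsmall
      simp only [mem_filter, mem_univ, true_and, lt_max_iff, lt_irrefl, or_false, T]
      intro hs
      linarith
    have hmono := costTruncAt_zero_le_of_nonneg hp0 (fun s => le_max_right _ 0) hsupp hB
    rw [costTruncAt_zero_eq_mul_add hv0 hδ.le hδv]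
    nlinarith

theorem exists_costTruncAt_le_expectedMax (hp0 : ∀ s, 0 ≤ p s) (hp1 : ∀ s, p s ≤ 1)
    (v : Fin m → ℝ) (hv0 : ∀ s, 0 ≤ v s) :
    ∃ B, 0 ≤ B ∧ (1 - (exp 1)⁻¹) * costTruncAt p v B ≤ expectedMax p v := by
  induction hn : #{s | 0 < v s} using Nat.strong_induction_on generalizing v with
  | _ n ih =>
    rcases ({s | 0 < v s} : Finset (Fin m)).eq_empty_or_nonempty with hempty | hne
    · have hv : v = 0 := funext fun s =>
        le_antisymm (not_lt.1 fun hs => filter_eq_empty_iff.1 hempty (mem_univ s) hs) (hv0 s)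
      subst hv
      refine ⟨0, le_rfl, ?_⟩
      rw [costTruncAt_zero hv0, expectedMax_eq_sum_bernoulliWeight]
      simpa using sum_nonneg fun A _ => mul_nonneg (bernoulliWeight_nonneg hp0 hp1 A)
        ((le_fold_max 0).2 (Or.inl le_rfl))
    · obtain ⟨s₀, hs₀, hmin⟩ := exists_min_image _ v hne
      have hpos : 0 < v s₀ := (mem_filter.1 hs₀).2
      refine exists_costTruncAt_le_expectedMax_of_posPart hp0 hp1 hv0 hpos
        (fun s hs => hmin s (by simpa using hs)) (ih _ ?_ _ (fun s => le_max_right _ _) rfl)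
      rw [← hn]
      refine card_lt_card ((ssubset_iff_of_subset fun s => ?_).2 ⟨s₀, hs₀, by simp⟩)
      simp only [mem_filter, mem_univ, true_and, lt_max_iff, lt_irrefl, or_false]
      intro hs
      linarith

lemma mul_costTrunc_le_expectedMax (hp0 : ∀ s, 0 ≤ p s) (hp1 : ∀ s, p s ≤ 1)
    (hsum : 1 ≤ ∑ s, p s) {c : Fin m → ℝ} (hc0 : ∀ s, 0 ≤ c s) :
    (1 - (exp 1)⁻¹) * costTrunc p c ≤ expectedMax p c := by
  obtain ⟨B, -, hB⟩ := exists_costTruncAt_le_expectedMax hp0 hp1 c hc0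
  have hbdd : BddBelow (Set.range (costTruncAt p c)) :=
    ⟨0, Set.forall_mem_range.2 (costTruncAt_nonneg hp0 hsum hc0)⟩
  exact (mul_le_mul_of_nonneg_left (ciInf_le hbdd B) one_sub_inv_exp_one_pos.le).trans hB

end ExpectedMax

/-- An α-approximation for the truncated objective is an
`α/(1-1/e)`-approximation for the MinEMax (expected-max) objective. -/
theorem trunc_approx_to_minEMax_approx {m : ℕ} {F : Type*} (p : Fin m → ℝ)
    (c : Fin m → F → ℝ) (α : ℝ) (hα : 1 ≤ α)
    (hp0 : ∀ s, 0 ≤ p s) (hp1 : ∀ s, p s ≤ 1) (hsum : 1 ≤ ∑ s, p s)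
    (hc0 : ∀ s x, 0 ≤ c s x)
    (xT : F) (hxT : ∀ y : F, costTrunc p (fun s => c s xT) ≤ costTrunc p (fun s => c s y))
    (x : F) (hx : costTrunc p (fun s => c s x) ≤ α * costTrunc p (fun s => c s xT)) :
    ∀ y : F,
      expectedMax p (fun s => c s x) ≤
        (α / (1 - 1 / Real.exp 1)) * expectedMax p (fun s => c s y) := by
  intro y
  have hα0 : 0 ≤ α := zero_le_one.trans hα
  calc expectedMax p (fun s => c s x)
      ≤ costTrunc p (fun s => c s x) := expectedMax_le_costTrunc hp0 hp1 hsum (hc0 · x)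
    _ ≤ α * costTrunc p (fun s => c s xT) := hx
    _ ≤ α * costTrunc p (fun s => c s y) := mul_le_mul_of_nonneg_left (hxT y) hα0
    _ ≤ α * (expectedMax p (fun s => c s y) / (1 - (exp 1)⁻¹)) :=
        mul_le_mul_of_nonneg_left ((le_div_iff₀' one_sub_inv_exp_one_pos).2
          (mul_costTrunc_le_expectedMax hp0 hp1 hsum (hc0 · y))) hα0
    _ = (α / (1 - 1 / exp 1)) * expectedMax p (fun s => c s y) := by
        rw [one_div]
        ring
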